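/- Let w be in the open probability simplex of ℝⁿ, Q ∈ ℝⁿ, η > 0, and w' the exponentiated-gradient update of w with gains Q. Then KL(w' ‖ w) ≤ η·(maxᵢ Qᵢ − minᵢ Qᵢ); i.e., the KL divergence between successive weight vectors is bounded by η times the range of the gain vector. -/
import Mathlib


theorem stmt_19 (n : ℕ) (hn : 1 ≤ n) (Q : Fin n → ℝ) (η : ℝ) (hη : 0 < η)
    (w : Fin n → ℝ) (hw : ∀ i, 0 < w i) (hsum : ∑ i, w i = 1)
    (w' : Fin n → ℝ)
    (hw' : ∀ i, w' i = w i * Real.exp (η * Q i) / ∑ j, w j * Real.exp (η * Q j)) :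
    ∑ i, w' i * Real.log (w' i / w i) ≤
      η * (Finset.univ.sup' ⟨⟨0, hn⟩, Finset.mem_univ _⟩ Q -
           Finset.univ.inf' ⟨⟨0, hn⟩, Finset.mem_univ _⟩ Q) := by
  set Z : ℝ := ∑ j, w j * Real.exp (η * Q j) with hZ
  have hZpos : 0 < Z := Finset.sum_pos (fun j _ => mul_pos (hw j) (Real.exp_pos _))
    ⟨⟨0, hn⟩, Finset.mem_univ _⟩
  set M : ℝ := Finset.univ.sup' ⟨⟨0, hn⟩, Finset.mem_univ _⟩ Q
  set m : ℝ := Finset.univ.inf' ⟨⟨0, hn⟩, Finset.mem_univ _⟩ Q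
  have hw'pos : ∀ i, 0 < w' i := by
    intro i; rw [hw' i]
    exact div_pos (mul_pos (hw i) (Real.exp_pos _)) hZpos
  have hsum' : ∑ i, w' i = 1 := by
    have : ∑ i, w' i = (∑ i, w i * Real.exp (η * Q i)) / Z := by
      simp_rw [hw']; rw [Finset.sum_div]
    rw [this, ← hZ, div_self (ne_of_gt hZpos)]
  have hlog : ∀ i, Real.log (w' i / w i) = η * Q i - Real.log Z := by
    intro i
    have : w' i / w i = Real.exp (η * Q i) / Z := by
      rw [hw' i, div_div]
      rw [mul_comm Z (w i), ← div_div, mul_comm (w i) (Real.exp (η * Q i)),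
        mul_div_assoc, div_self (ne_of_gt (hw i)), mul_one]
    rw [this, Real.log_div (Real.exp_ne_zero _) (ne_of_gt hZpos), Real.log_exp]
  have key : ∑ i, w' i * Real.log (w' i / w i)
      = η * (∑ i, w' i * Q i) - Real.log Z := by
    calc ∑ i, w' i * Real.log (w' i / w i)
        = ∑ i, (η * (w' i * Q i) - w' i * Real.log Z) := by
          refine Finset.sum_congr rfl fun i _ => ?_
          rw [hlog i]; ring
      _ = η * (∑ i, w' i * Q i) - (∑ i, w' i) * Real.log Z := by
          rw [Finset.sum_sub_distrib, ← Finset.mul_sum, ← Finset.sum_mul]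
      _ = η * (∑ i, w' i * Q i) - Real.log Z := by rw [hsum', one_mul]
  rw [key]
  have hQM : ∑ i, w' i * Q i ≤ M := by
    calc ∑ i, w' i * Q i ≤ ∑ i, w' i * M := by
          refine Finset.sum_le_sum fun i _ => ?_
          exact mul_le_mul_of_nonneg_left
            (Finset.le_sup' Q (Finset.mem_univ i)) (le_of_lt (hw'pos i))
      _ = M := by rw [← Finset.sum_mul, hsum', one_mul]
  have hlogZ : η * m ≤ Real.log Z := by
    have hZge : Real.exp (η * m) ≤ Z := by
      calc Real.exp (η * m) = ∑ i, w i * Real.exp (η * m) := by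
            rw [← Finset.sum_mul, hsum, one_mul]
        _ ≤ Z := by
            refine Finset.sum_le_sum fun i _ => ?_
            exact mul_le_mul_of_nonneg_left
              (Real.exp_le_exp.mpr (mul_le_mul_of_nonneg_left
                (Finset.inf'_le Q (Finset.mem_univ i)) (le_of_lt hη)))
              (le_of_lt (hw i))
    calc η * m = Real.log (Real.exp (η * m)) := (Real.log_exp _).symm
      _ ≤ Real.log Z := Real.log_le_log (Real.exp_pos _) hZge
  calc η * (∑ i, w' i * Q i) - Real.log Z
      ≤ η * M - η * m := by
        have := mul_le_mul_of_nonneg_left hQM (le_of_lt hη)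
        linarith
    _ = η * (M - m) := by ring
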